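/- arXiv:2310.06730 — 2 statements merged into one kernel-verified Lean document; each statement's English description precedes it below -/
import Mathlib

section
/- Let A ∈ ℝ^{p×K} and W ∈ ℝ^{K×n} both have nonnegative entries with columns summing to 1, and define D₀ = A·W and M₀ = diag(n^{-1} D₀ 𝟏_n). Then for every j ∈ [p], σ_K(Σ_W)·h_j ≤ M₀(j,j) ≤ h_j, where h_j = ∑_{k=1}^K A_{jk} and Σ_W = n^{-1} W Wᵀ and σ_K denotes the smallest eigenvalue. -/
/-! The smallest eigenvalue of a Hermitian matrix is at most each of its diagonal entries (these
are Rayleigh quotients at the standard basis vectors). Since the entries of `W` lie in `[0, 1]`,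
`(W Wᵀ)ₖₖ = ∑ᵢ Wₖᵢ² ≤ ∑ᵢ Wₖᵢ ≤ n`, so every row mean `rₖ = n⁻¹ ∑ᵢ Wₖᵢ` satisfies
`σ_K(Σ_W) ≤ rₖ ≤ 1`. Finally `M₀(j,j) = ∑ₖ Aⱼₖ rₖ` is a nonnegative combination of the `rₖ`
with total weight `hⱼ`. -/

open Matrix

lemma Matrix.IsHermitian.inf'_eigenvalues_le_diag {ι : Type*} [Fintype ι] [DecidableEq ι]
    {M : Matrix ι ι ℝ} (hM : M.IsHermitian) (hne : (Finset.univ : Finset ι).Nonempty) (k : ι) :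
    Finset.univ.inf' hne hM.eigenvalues ≤ M k k := by
  have hrow : ∑ i, hM.eigenvectorBasis i k ^ 2 = 1 := by
    simpa [Matrix.mul_apply, Matrix.one_apply, sq] using
      congrFun₂ (Matrix.mem_unitaryGroup_iff.mp hM.eigenvectorUnitary.2) k k
  have hdiag : M k k = ∑ i, hM.eigenvalues i * hM.eigenvectorBasis i k ^ 2 := by
    conv_lhs => rw [hM.spectral_theorem]
    simp only [RCLike.ofReal_real_eq_id, CompTriple.comp_eq, Unitary.conjStarAlgAut_apply,
      mul_apply, eigenvectorUnitary_apply, diagonal_apply, mul_ite, mul_zero,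
      Finset.sum_ite_eq', Finset.mem_univ, ↓reduceIte, star_apply, star_trivial]
    exact Finset.sum_congr rfl fun i _ => by ring
  calc Finset.univ.inf' hne hM.eigenvalues
      = ∑ i, Finset.univ.inf' hne hM.eigenvalues * hM.eigenvectorBasis i k ^ 2 := by
        rw [← Finset.mul_sum, hrow, mul_one]
    _ ≤ ∑ i, hM.eigenvalues i * hM.eigenvectorBasis i k ^ 2 := by
      gcongr with i
      exact Finset.inf'_le _ (Finset.mem_univ i)
    _ = M k k := hdiag.symm

section ColumnStochastic

variable {m n : Type*} [Fintype m] {W : Matrix m n ℝ}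
  (hWnn : ∀ k i, 0 ≤ W k i) (hWcol : ∀ i, ∑ k, W k i = 1)

include hWnn hWcol

lemma Matrix.le_one_of_sum_col_eq_one (k : m) (i : n) : W k i ≤ 1 :=
  hWcol i ▸ Finset.single_le_sum (fun k' _ => hWnn k' i) (Finset.mem_univ k)

lemma Matrix.mul_transpose_self_apply_self_le_sum_row [Fintype n] (k : m) :
    (W * Wᵀ) k k ≤ ∑ i, W k i := by
  simp only [mul_apply, transpose_apply]
  gcongr with i
  exact mul_le_of_le_one_right (hWnn k i) (le_one_of_sum_col_eq_one hWnn hWcol k i)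

lemma Matrix.sum_row_le_card [Fintype n] (k : m) : ∑ i, W k i ≤ Fintype.card n := by
  simpa using Finset.sum_le_sum fun i (_ : i ∈ Finset.univ) =>
    le_one_of_sum_col_eq_one hWnn hWcol k i

end ColumnStochastic

lemma Matrix.sum_row_mul {l m n : Type*} [Fintype m] [Fintype n] (A : Matrix l m ℝ)
    (W : Matrix m n ℝ) (j : l) : ∑ i, (A * W) j i = ∑ k, A j k * ∑ i, W k i := by
  simp only [mul_apply, Finset.mul_sum]
  exact Finset.sum_comm

theorem stmt_3_general (p K n : ℕ) (hK : 0 < K)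
    (A : Matrix (Fin p) (Fin K) ℝ) (W : Matrix (Fin K) (Fin n) ℝ)
    (hAnn : ∀ j k, 0 ≤ A j k)
    (hWnn : ∀ k i, 0 ≤ W k i) (hWcol : ∀ i, ∑ k, W k i = 1)
    (hH : (((n : ℝ)⁻¹ • (W * Wᵀ)).IsHermitian)) :
    ∀ j : Fin p,
      (Finset.univ.inf' ⟨⟨0, hK⟩, Finset.mem_univ _⟩ hH.eigenvalues) * (∑ k, A j k)
          ≤ (n : ℝ)⁻¹ * (∑ i, (A * W) j i)
      ∧ (n : ℝ)⁻¹ * (∑ i, (A * W) j i) ≤ ∑ k, A j k := by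
  intro j
  set μ := Finset.univ.inf' ⟨⟨0, hK⟩, Finset.mem_univ _⟩ hH.eigenvalues
  have hμ : ∀ k, μ ≤ (n : ℝ)⁻¹ * ∑ i, W k i := fun k =>
    (hH.inf'_eigenvalues_le_diag _ k).trans <| mul_le_mul_of_nonneg_left
      (mul_transpose_self_apply_self_le_sum_row hWnn hWcol k) (by positivity)
  have hle_one : ∀ k, (n : ℝ)⁻¹ * ∑ i, W k i ≤ 1 := fun k =>
    inv_mul_le_one_of_le₀ (by simpa using sum_row_le_card hWnn hWcol k) n.cast_nonneg
  have hmean : (n : ℝ)⁻¹ * ∑ i, (A * W) j i = ∑ k, A j k * ((n : ℝ)⁻¹ * ∑ i, W k i) := by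
    rw [sum_row_mul, Finset.mul_sum]
    exact Finset.sum_congr rfl fun k _ => by ring
  rw [hmean]
  constructor
  · rw [Finset.mul_sum]
    exact Finset.sum_le_sum fun k _ => by
      rw [mul_comm]
      exact mul_le_mul_of_nonneg_left (hμ k) (hAnn j k)
  · calc ∑ k, A j k * ((n : ℝ)⁻¹ * ∑ i, W k i) ≤ ∑ k, A j k * 1 :=
          Finset.sum_le_sum fun k _ => mul_le_mul_of_nonneg_left (hle_one k) (hAnn j k)
      _ = ∑ k, A j k := by simp

theorem stmt_3 (p K n : ℕ) (hK : 0 < K) (hn : 0 < n)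
    (A : Matrix (Fin p) (Fin K) ℝ) (W : Matrix (Fin K) (Fin n) ℝ)
    (hAnn : ∀ j k, 0 ≤ A j k) (hAcol : ∀ k, ∑ j, A j k = 1)
    (hWnn : ∀ k i, 0 ≤ W k i) (hWcol : ∀ i, ∑ k, W k i = 1)
    (hH : (((n : ℝ)⁻¹ • (W * Wᵀ)).IsHermitian)) :
    ∀ j : Fin p,
      (Finset.univ.inf' ⟨⟨0, hK⟩, Finset.mem_univ _⟩ hH.eigenvalues) * (∑ k, A j k)
          ≤ (n : ℝ)⁻¹ * (∑ i, (A * W) j i)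
      ∧ (n : ℝ)⁻¹ * (∑ i, (A * W) j i) ≤ ∑ k, A j k :=
  stmt_3_general p K n hK A W hAnn hWnn hWcol hH
end

section
/- Let a₁ ≥ a₂ ≥ … ≥ a_p ≥ 0 be nonnegative reals satisfying j·a_j^q ≤ s for all j ∈ [p], where q ∈ (0,1) and s > 0. Then for any τ > 0, ∑_{j=1}^p min(a_j, τ) ≤ (1/(1−q)) · s · τ^{1−q}. -/
/-!
By the layer-cake formula, `∑ⱼ min (a j) τ = ∫₀^τ #{j | u ≤ a j} du`. If `j` is the largest index
with `u ≤ a j`, the count is at most `j + 1`, and `(j + 1) u^q ≤ (j + 1) (a j)^q ≤ s`; so the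
integrand is at most `s u^(-q)`, whose integral over `[0, τ]` is `s τ^(1-q) / (1 - q)`.
-/

open MeasureTheory Set intervalIntegral Real
open scoped Finset

lemma integral_indicator_Iic_one_eq_min {a τ : ℝ} (ha : 0 ≤ a) (hτ : 0 ≤ τ) :
    ∫ u in (0:ℝ)..τ, (Iic a).indicator 1 u = min a τ := by
  rw [integral_of_le hτ, integral_indicator_one measurableSet_Iic,
    measureReal_restrict_apply measurableSet_Iic, inter_comm, Ioc_inter_Iic,
    Real.volume_real_Ioc_of_le (le_min hτ ha), sub_zero, min_comm]

lemma antitone_indicator_Iic_one (a : ℝ) : Antitone ((Iic a).indicator (1 : ℝ → ℝ)) :=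
  fun _ _ huv => by
    simp only [indicator_apply, Set.mem_Iic, Pi.one_apply]
    split_ifs <;> linarith

lemma antitone_card_filter_le {ι : Type*} [Fintype ι] (a : ι → ℝ) :
    Antitone fun u : ℝ => (#{i | u ≤ a i} : ℝ) :=
  fun _ _ huv => Nat.cast_le.2 <| Finset.card_le_card <|
    Finset.monotone_filter_right _ fun _ _ => huv.trans

lemma sum_min_eq_integral_card_filter_le {ι : Type*} [Fintype ι] {a : ι → ℝ} (ha : ∀ i, 0 ≤ a i)
    {τ : ℝ} (hτ : 0 ≤ τ) :
    ∑ i, min (a i) τ = ∫ u in (0:ℝ)..τ, (#{i | u ≤ a i} : ℝ) := by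
  have hcard (u : ℝ) : (#{i | u ≤ a i} : ℝ) = ∑ i, (Iic (a i)).indicator 1 u := by
    simp [indicator_apply, Finset.sum_boole]
  simp_rw [hcard]
  rw [integral_finsetSum fun i _ => (antitone_indicator_Iic_one (a i)).intervalIntegrable]
  exact Finset.sum_congr rfl fun i _ => (integral_indicator_Iic_one_eq_min (ha i) hτ).symm

lemma card_filter_le_mul_rpow_le {p : ℕ} {a : Fin p → ℝ} {q s u : ℝ} (hq : 0 ≤ q) (hs : 0 ≤ s)
    (hu : 0 ≤ u) (hsp : ∀ j : Fin p, ((j : ℕ) + 1 : ℝ) * a j ^ q ≤ s) :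
    (#{j | u ≤ a j} : ℝ) * u ^ q ≤ s := by
  set S : Finset (Fin p) := {j | u ≤ a j}
  rcases S.eq_empty_or_nonempty with hS | hS
  · simpa [hS] using hs
  set j := S.max' hS
  have huj : u ≤ a j := (Finset.mem_filter.1 (S.max'_mem hS)).2
  have hcard : #S ≤ (j : ℕ) + 1 :=
    (Finset.card_le_card fun i hi => Finset.mem_Iic.2 (S.le_max' i hi)).trans (Fin.card_Iic j).le
  calc (#S : ℝ) * u ^ q ≤ ((j : ℕ) + 1 : ℝ) * a j ^ q := by
        gcongr
        exact_mod_cast hcard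
    _ ≤ s := hsp j

lemma integral_rpow_neg_of_lt_one {q : ℝ} (hq : q < 1) (τ : ℝ) :
    ∫ u in (0:ℝ)..τ, u ^ (-q) = τ ^ (1 - q) / (1 - q) := by
  rw [integral_rpow (Or.inl (by linarith)), zero_rpow (by linarith), neg_add_eq_sub, sub_zero]

theorem stmt_5_general (p : ℕ) (q s τ : ℝ) (hq0 : 0 < q) (hq1 : q < 1) (hs : 0 < s) (hτ : 0 < τ)
    (a : Fin p → ℝ) (hnn : ∀ j, 0 ≤ a j)
    (hsp : ∀ j : Fin p, ((j : ℕ) + 1 : ℝ) * (a j) ^ q ≤ s) :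
    ∑ j, min (a j) τ ≤ (1 / (1 - q)) * s * τ ^ (1 - q) := by
  have hcount : ∀ u ∈ Ioo 0 τ, (#{j | u ≤ a j} : ℝ) ≤ s * u ^ (-q) := fun u hu => by
    rw [rpow_neg hu.1.le, ← div_eq_mul_inv, le_div_iff₀ (rpow_pos_of_pos hu.1 q)]
    exact card_filter_le_mul_rpow_le hq0.le hs.le hu.1.le hsp
  calc ∑ j, min (a j) τ = ∫ u in (0:ℝ)..τ, (#{j | u ≤ a j} : ℝ) :=
        sum_min_eq_integral_card_filter_le hnn hτ.le
    _ ≤ ∫ u in (0:ℝ)..τ, s * u ^ (-q) :=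
        integral_mono_on_of_le_Ioo hτ.le (antitone_card_filter_le a).intervalIntegrable
          ((intervalIntegral.intervalIntegrable_rpow' (by linarith)).const_mul s) hcount
    _ = 1 / (1 - q) * s * τ ^ (1 - q) := by
        rw [intervalIntegral.integral_const_mul, integral_rpow_neg_of_lt_one hq1]
        ring

theorem stmt_5 (p : ℕ) (q s τ : ℝ) (hq0 : 0 < q) (hq1 : q < 1) (hs : 0 < s) (hτ : 0 < τ)
    (a : Fin p → ℝ) (hnn : ∀ j, 0 ≤ a j)
    (hord : ∀ i j : Fin p, i ≤ j → a j ≤ a i)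
    (hsp : ∀ j : Fin p, ((j : ℕ) + 1 : ℝ) * (a j) ^ q ≤ s) :
    ∑ j, min (a j) τ ≤ (1 / (1 - q)) * s * τ ^ (1 - q) :=
  stmt_5_general p q s τ hq0 hq1 hs hτ a hnn hsp
end
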